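/- arXiv:2402.05470 — 2 statements merged into one kernel-verified Lean document; each statement's English description precedes it below -/
import Mathlib

section
/- There is no pair of C² functions ψ, θ : ℝ → ℝ with ψ positive, θ positive, ψ(s)·θ(s)^n = 1 for all s (for some integer n ≥ 1), ψ bounded below by a positive constant, and θ''(s) ≥ δ·θ(s) for all s for some δ > 0. -/
/-!
ψ ≥ m forces θⁿ = 1/ψ ≤ 1/m, so θ is bounded above; θ'' ≥ δθ > 0 makes θ convex. A
differentiable convex function on ℝ lies above each of its tangent lines, and a
nonhorizontal line is unbounded above, so θ' ≡ 0 and hence θ'' ≡ 0 < δθ.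
-/

open Set

theorem ConvexOn.add_deriv_mul_sub_le {S : Set ℝ} {f : ℝ → ℝ} {x y : ℝ}
    (hfc : ConvexOn ℝ S f) (hx : x ∈ S) (hy : y ∈ S) (hfd : DifferentiableAt ℝ f x) :
    f x + deriv f x * (y - x) ≤ f y := by
  rcases lt_trichotomy x y with hxy | rfl | hyx
  · have hslope := hfc.deriv_le_slope hx hy hxy hfd
    rw [slope_def_field, le_div_iff₀ (sub_pos.2 hxy)] at hslope
    linarith
  · simp
  · have hslope := hfc.slope_le_deriv hy hx hyx hfd
    rw [slope_def_field, div_le_iff₀ (sub_pos.2 hyx)] at hslope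
    linarith

theorem ConvexOn.deriv_eq_zero_of_bddAbove {f : ℝ → ℝ} (hfc : ConvexOn ℝ univ f)
    (hf : BddAbove (range f)) {x : ℝ} (hfd : DifferentiableAt ℝ f x) : deriv f x = 0 := by
  obtain ⟨C, hC⟩ := hf
  by_contra hne
  -- the tangent line at `x` reaches height `C + 1` at `y`
  set y := x + (C + 1 - f x) / deriv f x
  have htangent := hfc.add_deriv_mul_sub_le (mem_univ x) (mem_univ y) hfd
  rw [add_sub_cancel_left, mul_div_cancel₀ _ hne] at htangent
  linarith [hC (mem_range_self y)]

theorem le_max_one_inv_of_mul_pow_eq_one {n : ℕ} (hn : n ≠ 0) {m x y : ℝ} (hm : 0 < m)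
    (hmy : m ≤ y) (h : y * x ^ n = 1) : x ≤ max 1 m⁻¹ := by
  rcases le_or_gt x 1 with hx | hx
  · exact le_max_of_le_left hx
  · calc x ≤ x ^ n := le_self_pow₀ hx.le hn
      _ = y⁻¹ := eq_inv_of_mul_eq_one_right h
      _ ≤ m⁻¹ := inv_anti₀ hm hmy
      _ ≤ max 1 m⁻¹ := le_max_right _ _

theorem stmt_1_general (n : ℕ) (hn : 1 ≤ n) (ψ θ : ℝ → ℝ)
    (hθ : ContDiff ℝ 2 θ)
    (m : ℝ) (hm : 0 < m) (hψm : ∀ s, m ≤ ψ s)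
    (hθpos : ∀ s, 0 < θ s)
    (hrel : ∀ s, ψ s * θ s ^ n = 1)
    (δ : ℝ) (hδ : 0 < δ) (hconv : ∀ s, δ * θ s ≤ deriv (deriv θ) s) :
    False := by
  have hθd : Differentiable ℝ θ := hθ.differentiable (by norm_num)
  have hθ''pos : ∀ s, 0 < deriv (deriv θ) s := fun s => (mul_pos hδ (hθpos s)).trans_le (hconv s)
  have hbdd : BddAbove (range θ) := ⟨max 1 m⁻¹, forall_mem_range.2 fun s =>
    le_max_one_inv_of_mul_pow_eq_one (by omega) hm (hψm s) (hrel s)⟩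
  have hcvx : ConvexOn ℝ univ θ :=
    convexOn_univ_of_deriv2_nonneg hθd hθ.differentiable_deriv_two fun s => (hθ''pos s).le
  have hflat : deriv θ = 0 := funext fun s => hcvx.deriv_eq_zero_of_bddAbove hbdd (hθd s)
  simpa [hflat] using hθ''pos 0

/-- There is no pair of C² functions ψ, θ with ψ ≥ m > 0, θ > 0, ψθⁿ = 1,
and θ'' ≥ δθ for some δ > 0. -/
theorem stmt_1 (n : ℕ) (hn : 1 ≤ n) (ψ θ : ℝ → ℝ)
    (hψ : ContDiff ℝ 2 ψ) (hθ : ContDiff ℝ 2 θ)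
    (m : ℝ) (hm : 0 < m) (hψm : ∀ s, m ≤ ψ s)
    (hθpos : ∀ s, 0 < θ s)
    (hrel : ∀ s, ψ s * θ s ^ n = 1)
    (δ : ℝ) (hδ : 0 < δ) (hconv : ∀ s, δ * θ s ≤ deriv (deriv θ) s) :
    False :=
  stmt_1_general n hn ψ θ hθ m hm hψm hθpos hrel δ hδ hconv
end

section
/- Define x₁(s) = √(2(eˢ + e⁻ˢ − 1)) for s in a neighborhood of 0. Then (x₁(s)·x₁'(s))' = eˢ + e⁻ˢ, and consequently (1 − (x₁(s) x₁'(s))')/x₁(s)² = −1/2 for all s in this neighborhood. -/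
open Real

/- With g(s) = 2(eˢ + e⁻ˢ − 1) = 4 cosh s − 2 ≥ 2, x₁ = √g gives x₁x₁' = g'/2 = eˢ − e⁻ˢ,
whose derivative is eˢ + e⁻ˢ = g/2 + 1; hence (1 − (x₁x₁')')/x₁² = (−g/2)/g = −1/2. -/

lemma sqrt_mul_deriv_sqrt {g : ℝ → ℝ} {g' x : ℝ} (hg : HasDerivAt g g' x) (hx : 0 < g x) :
    √(g x) * deriv (fun y => √(g y)) x = g' / 2 := by
  have hsqrt : √(g x) ≠ 0 := (sqrt_pos.mpr hx).ne'
  rw [(hg.sqrt hx.ne').deriv]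
  field_simp

lemma hasDerivAt_exp_add_exp_neg (s : ℝ) :
    HasDerivAt (fun u => exp u + exp (-u)) (exp s - exp (-s)) s :=
  ((hasDerivAt_id' s).exp.add (hasDerivAt_neg' s).exp).congr_deriv (by ring)

lemma hasDerivAt_exp_sub_exp_neg (s : ℝ) :
    HasDerivAt (fun u => exp u - exp (-u)) (exp s + exp (-s)) s :=
  ((hasDerivAt_id' s).exp.sub (hasDerivAt_neg' s).exp).congr_deriv (by ring)

lemma two_mul_exp_add_exp_neg_sub_one_pos (s : ℝ) : 0 < 2 * (exp s + exp (-s) - 1) := by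
  have h := one_le_cosh s
  rw [cosh_eq] at h
  linarith

theorem stmt_5_general (ε : ℝ)
    (x₁ : ℝ → ℝ) (hx₁ : ∀ s, x₁ s = Real.sqrt (2 * (Real.exp s + Real.exp (-s) - 1))) :
    ∀ s ∈ Set.Ioo (-ε) ε,
      deriv (fun u => x₁ u * deriv x₁ u) s = Real.exp s + Real.exp (-s) ∧
      (1 - deriv (fun u => x₁ u * deriv x₁ u) s) / (x₁ s) ^ 2 = -(1 / 2) := by
  intro s _
  have hprod : (fun u => x₁ u * deriv x₁ u) = fun u => exp u - exp (-u) := by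
    obtain rfl : x₁ = fun u => √(2 * (exp u + exp (-u) - 1)) := funext hx₁
    funext u
    rw [sqrt_mul_deriv_sqrt (((hasDerivAt_exp_add_exp_neg u).sub_const 1).const_mul 2)
      (two_mul_exp_add_exp_neg_sub_one_pos u)]
    ring
  have hderiv : deriv (fun u => x₁ u * deriv x₁ u) s = exp s + exp (-s) := by
    rw [hprod]
    exact (hasDerivAt_exp_sub_exp_neg s).deriv
  refine ⟨hderiv, ?_⟩
  rw [hderiv, hx₁, sq_sqrt (two_mul_exp_add_exp_neg_sub_one_pos s).le,
    div_eq_iff (two_mul_exp_add_exp_neg_sub_one_pos s).ne']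
  ring

/-- For x₁(s) = √(2(eˢ + e⁻ˢ − 1)) near 0, (x₁x₁')' = eˢ + e⁻ˢ and
(1 − (x₁x₁')')/x₁² = −1/2. -/
theorem stmt_5 (ε : ℝ) (hε : 0 < ε)
    (x₁ : ℝ → ℝ) (hx₁ : ∀ s, x₁ s = Real.sqrt (2 * (Real.exp s + Real.exp (-s) - 1))) :
    ∀ s ∈ Set.Ioo (-ε) ε,
      deriv (fun u => x₁ u * deriv x₁ u) s = Real.exp s + Real.exp (-s) ∧
      (1 - deriv (fun u => x₁ u * deriv x₁ u) s) / (x₁ s) ^ 2 = -(1 / 2) :=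
  stmt_5_general ε x₁ hx₁
end
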